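/- Fix an integer p ≥ 1, set n = 2p+1, and let θ, the couplings g_{ab}, and the matrices F_{ab} be as in the q = p+1 case of the AIII construction, with real parameters g ≠ 0, g_1 ≠ 0 and g_2 satisfying g_1² − 2·g² + g·g_2 = 0. Then the constraint equation Σ_{α} g_α F_α = 0 holds: Σ_{1 ≤ a ≠ b ≤ n} g_{ab}·F_{ab} = 0 as an n×n matrix. -/

import Mathlib

open Matrix

/-- The middle index `p+1` (0-based: `p`) of `{1,…,2p+1}`. -/
def pmid (p : ℕ) : Fin (2*p+1) := ⟨p, by omega⟩

/-- The involution `θ` of `{1,…,2p+1}` (0-based: `{0,…,2p}`) for the AIII construction with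
`q = p+1`: it exchanges the first and third blocks and fixes the middle index. -/
def theta2 (p : ℕ) (a : Fin (2*p+1)) : Fin (2*p+1) :=
  if h : (a : ℕ) < p then ⟨a + p + 1, by omega⟩
  else if h' : (a : ℕ) = p then a
  else ⟨(a : ℕ) - p - 1, by have := a.isLt; omega⟩

/-- The coupling constants for the AIII construction with `q = p+1`:
`g_{aa} = 0`; `g_{ab} = g₁` if exactly one of `a`, `b` is the middle index;
`g_{ab} = g₂` if `b = θ(a)` and `a` is not the middle index; and `g_{ab} = g` otherwise. -/
def g11 (p : ℕ) (g g1 g2 : ℝ) (a b : Fin (2*p+1)) : ℝ :=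
  if a = b then 0
  else if (a = pmid p ∧ b ≠ pmid p) ∨ (a ≠ pmid p ∧ b = pmid p) then g1
  else if b = theta2 p a ∧ a ≠ pmid p then g2
  else g

/-- The standard matrices `F_{ab}` (both `a`, `b` in the first or third block). -/
noncomputable def Fstd11 (p : ℕ) (a b : Fin (2*p+1)) :
    Matrix (Fin (2*p+1)) (Fin (2*p+1)) ℝ :=
  -(1/4 : ℝ) • (Matrix.single a a 1 + Matrix.single (theta2 p a) (theta2 p a) 1
      + Matrix.single b b 1 + Matrix.single (theta2 p b) (theta2 p b) 1)
    + ((2*p+1 : ℝ))⁻¹ • 1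

/-- The mixed matrices `F_{a,p+1}` (`a` in the first or third block, second index the
middle one). -/
noncomputable def Fmix11 (p : ℕ) (g g1 : ℝ) (a : Fin (2*p+1)) :
    Matrix (Fin (2*p+1)) (Fin (2*p+1)) ℝ :=
  -(g1/(4*g)) • (Matrix.single a a 1 + Matrix.single (theta2 p a) (theta2 p a) 1)
    - (g/(2*g1)) • Matrix.single (pmid p) (pmid p) 1
    + (((2*p+1 : ℝ))⁻¹ * (g1/(2*g) + g/(2*g1))) • 1

/-- The full family `F_{ab}` of the AIII construction with `q = p+1`, with
`F_{p+1,b} = F_{b,p+1}`. -/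
noncomputable def F11 (p : ℕ) (g g1 : ℝ) (a b : Fin (2*p+1)) :
    Matrix (Fin (2*p+1)) (Fin (2*p+1)) ℝ :=
  if a = pmid p then Fmix11 p g g1 b
  else if b = pmid p then Fmix11 p g g1 a
  else Fstd11 p a b

/-! The matrices `F_{ab}` are linear combinations of `1`, `E_{p+1,p+1}` and the projections
`P_a = E_{aa} + E_{θa,θa}`, and `θ` permutes the indices other than `p+1`, so
`∑_{a ≠ p+1} P_a = 2 (1 - E_{p+1,p+1})`. Summing row by row, the constraint sum becomes
`α (1 - E_{p+1,p+1}) + β E_{p+1,p+1} + γ 1` with `α = β = -2pg` and `γ = 2pg`;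
the values of `α` and `γ` are exactly where `g₁² = 2g² - g g₂` enters. -/

open Finset

theorem Finset.sum_erase_comp_of_involutive {ι M : Type*} [Fintype ι] [DecidableEq ι]
    [AddCommMonoid M] {σ : ι → ι} (hσ : Function.Involutive σ) {m : ι} (hm : σ m = m)
    (f : ι → M) : ∑ a ∈ univ.erase m, f (σ a) = ∑ a ∈ univ.erase m, f a :=
  sum_nbij' σ σ (by simp [hσ.injective.ne_iff' hm]) (by simp [hσ.injective.ne_iff' hm])
    (fun a _ => hσ a) (fun a _ => hσ a) (fun _ _ => rfl)

theorem Matrix.sum_erase_single_one {ι R : Type*} [Fintype ι] [DecidableEq ι] [AddCommGroup R]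
    [One R] (m : ι) : ∑ a ∈ univ.erase m, single a a (1 : R) = 1 - single m m 1 := by
  rw [sum_erase_eq_sub (mem_univ m), Matrix.sum_single_one]

section AIII

variable {p : ℕ} {g g1 g2 : ℝ} {a b : Fin (2*p+1)}

theorem theta2_val (a : Fin (2*p+1)) :
    (theta2 p a : ℕ) =
      if (a : ℕ) < p then a + p + 1 else if (a : ℕ) = p then a else a - p - 1 := by
  unfold theta2; split_ifs <;> rfl

theorem theta2_involutive : Function.Involutive (theta2 p) := fun a => by
  have := a.isLt
  ext; rw [theta2_val, theta2_val]; split_ifs <;> omega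

theorem theta2_eq_pmid_iff : theta2 p a = pmid p ↔ a = pmid p := by
  have := a.isLt
  simp only [Fin.ext_iff, theta2_val, pmid]; split_ifs <;> omega

theorem theta2_pmid : theta2 p (pmid p) = pmid p := theta2_eq_pmid_iff.2 rfl

theorem theta2_ne_self (ha : a ≠ pmid p) : theta2 p a ≠ a := by
  have := a.isLt
  have ha : (a : ℕ) ≠ p := fun h => ha (Fin.ext h)
  simp only [ne_eq, Fin.ext_iff, theta2_val]; split_ifs <;> omega

theorem card_erase_pmid : #(univ.erase (pmid p)) = 2 * p := by
  simp [card_erase_of_mem]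

theorem g11_self : g11 p g g1 g2 a a = 0 := if_pos rfl

theorem g11_pmid_left (hb : b ≠ pmid p) : g11 p g g1 g2 (pmid p) b = g1 := by
  simp [g11, hb, Ne.symm hb]

theorem g11_pmid_right (ha : a ≠ pmid p) : g11 p g g1 g2 a (pmid p) = g1 := by
  simp [g11, ha]

theorem g11_of_ne_pmid (ha : a ≠ pmid p) (hb : b ≠ pmid p) :
    g11 p g g1 g2 a b
      = g - (if b = a then g else 0) + (if b = theta2 p a then g2 - g else 0) := by
  by_cases hba : b = a
  · subst hba; simp [g11, theta2_ne_self ha |>.symm]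
  · by_cases hbt : b = theta2 p a
    · subst hbt; simp [g11, ha, hb, hba, Ne.symm hba]
    · simp [g11, ha, hb, hba, Ne.symm hba, hbt]

theorem F11_pmid_left : F11 p g g1 (pmid p) b = Fmix11 p g g1 b := if_pos rfl

theorem F11_pmid_right (ha : a ≠ pmid p) : F11 p g g1 a (pmid p) = Fmix11 p g g1 a := by
  simp [F11, ha]

theorem F11_of_ne_pmid (ha : a ≠ pmid p) (hb : b ≠ pmid p) : F11 p g g1 a b = Fstd11 p a b := by
  simp [F11, ha, hb]

def thetaProj (p : ℕ) (a : Fin (2*p+1)) : Matrix (Fin (2*p+1)) (Fin (2*p+1)) ℝ :=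
  single a a 1 + single (theta2 p a) (theta2 p a) 1

theorem thetaProj_theta2 : thetaProj p (theta2 p a) = thetaProj p a := by
  rw [thetaProj, thetaProj, theta2_involutive a]
  exact add_comm _ _

theorem sum_thetaProj :
    ∑ a ∈ univ.erase (pmid p), thetaProj p a
      = (2 : ℝ) • (1 - single (pmid p) (pmid p) 1) := by
  simp only [thetaProj]
  rw [sum_add_distrib,
    sum_erase_comp_of_involutive theta2_involutive theta2_pmid (fun a => single a a (1 : ℝ)),
    sum_erase_single_one, two_smul]

theorem Fstd11_eq (p : ℕ) (a b : Fin (2*p+1)) :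
    Fstd11 p a b
      = -(1/4 : ℝ) • (thetaProj p a + thetaProj p b) + ((2*p+1 : ℝ))⁻¹ • 1 := by
  simp only [Fstd11, thetaProj, add_assoc]

theorem Fmix11_eq (p : ℕ) (g g1 : ℝ) (a : Fin (2*p+1)) :
    Fmix11 p g g1 a = -(g1/(4*g)) • thetaProj p a - (g/(2*g1)) • single (pmid p) (pmid p) 1
      + (((2*p+1 : ℝ))⁻¹ * (g1/(2*g) + g/(2*g1))) • 1 := rfl

theorem sum_Fmix11 :
    ∑ a ∈ univ.erase (pmid p), Fmix11 p g g1 a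
      = -(g1/(2*g)) • (1 - single (pmid p) (pmid p) 1)
        - (2*p * (g/(2*g1))) • single (pmid p) (pmid p) 1
        + (2*p * ((2*p+1 : ℝ))⁻¹ * (g1/(2*g) + g/(2*g1))) • 1 := by
  simp only [Fmix11_eq, sum_add_distrib, sum_sub_distrib, ← smul_sum, sum_const, card_erase_pmid,
    sum_thetaProj]
  module

theorem sum_sum_Fstd11 :
    ∑ a ∈ univ.erase (pmid p), ∑ b ∈ univ.erase (pmid p), Fstd11 p a b
      = -(2*p : ℝ) • (1 - single (pmid p) (pmid p) 1)
        + (2*p * (2*p) * ((2*p+1 : ℝ))⁻¹) • 1 := by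
  simp only [Fstd11_eq, sum_add_distrib, ← smul_sum, sum_const, card_erase_pmid, sum_thetaProj]
  module

theorem sum_Fstd11_self :
    ∑ a ∈ univ.erase (pmid p), Fstd11 p a a
      = -(1 - single (pmid p) (pmid p) 1) + (2*p * ((2*p+1 : ℝ))⁻¹) • 1 := by
  simp only [Fstd11_eq, sum_add_distrib, ← smul_sum, sum_const, card_erase_pmid, sum_thetaProj]
  module

theorem sum_Fstd11_theta2 :
    ∑ a ∈ univ.erase (pmid p), Fstd11 p a (theta2 p a)
      = ∑ a ∈ univ.erase (pmid p), Fstd11 p a a := by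
  simp only [Fstd11_eq, thetaProj_theta2]

theorem sum_ne_eq_sum_univ (a : Fin (2*p+1)) :
    ∑ b ∈ univ.filter (fun b => b ≠ a), g11 p g g1 g2 a b • F11 p g g1 a b
      = ∑ b, g11 p g g1 g2 a b • F11 p g g1 a b := by
  rw [filter_ne', sum_erase _ (by rw [g11_self, zero_smul])]

theorem row_sum_pmid :
    ∑ b, g11 p g g1 g2 (pmid p) b • F11 p g g1 (pmid p) b
      = g1 • ∑ b ∈ univ.erase (pmid p), Fmix11 p g g1 b := by
  rw [← add_sum_erase _ _ (mem_univ _), g11_self, zero_smul, zero_add, smul_sum]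
  refine sum_congr rfl fun b hb => ?_
  rw [g11_pmid_left (ne_of_mem_erase hb), F11_pmid_left]

theorem row_sum_of_ne_pmid (ha : a ≠ pmid p) :
    ∑ b, g11 p g g1 g2 a b • F11 p g g1 a b
      = g1 • Fmix11 p g g1 a + (g • ∑ b ∈ univ.erase (pmid p), Fstd11 p a b
          - g • Fstd11 p a a + (g2 - g) • Fstd11 p a (theta2 p a)) := by
  have haU : a ∈ univ.erase (pmid p) := mem_erase.2 ⟨ha, mem_univ a⟩
  have htaU : theta2 p a ∈ univ.erase (pmid p) :=
    mem_erase.2 ⟨mt theta2_eq_pmid_iff.1 ha, mem_univ _⟩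
  rw [← add_sum_erase _ _ (mem_univ (pmid p)), g11_pmid_right ha, F11_pmid_right ha]
  congr 1
  calc ∑ b ∈ univ.erase (pmid p), g11 p g g1 g2 a b • F11 p g g1 a b
      = ∑ b ∈ univ.erase (pmid p),
          (g • Fstd11 p a b - (if b = a then g • Fstd11 p a a else 0)
            + (if b = theta2 p a then (g2 - g) • Fstd11 p a (theta2 p a) else 0)) := by
        refine sum_congr rfl fun b hb => ?_
        rw [g11_of_ne_pmid ha (ne_of_mem_erase hb), F11_of_ne_pmid ha (ne_of_mem_erase hb)]
        rcases eq_or_ne b a with rfl | hba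
        · simp only [↓reduceIte, if_neg (theta2_ne_self ha).symm]; module
        · by_cases hbt : b = theta2 p a
          · subst hbt; simp only [if_neg hba, ↓reduceIte]; module
          · simp only [if_neg hba, if_neg hbt]; module
    _ = _ := by
        rw [sum_add_distrib, sum_sub_distrib, ← smul_sum, sum_ite_eq' _ _, sum_ite_eq' _ _,
          if_pos haU, if_pos htaU]

theorem constraint_coeff_one_sub_pmid (p : ℕ) (hg : g ≠ 0) (hrel : g1^2 - 2*g^2 + g*g2 = 0) :
    2 * g1 * (-(g1/(2*g))) + g * (-(2*p)) + (g2 - 2*g) * (-1) = -(2*p*g) := by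
  field_simp
  linear_combination -hrel

theorem constraint_coeff_pmid (p : ℕ) (g : ℝ) (hg1 : g1 ≠ 0) :
    2 * g1 * (2*p * (g/(2*g1))) = 2*p*g := by
  field_simp

theorem constraint_coeff_one (p : ℕ) (hg : g ≠ 0) (hg1 : g1 ≠ 0)
    (hrel : g1^2 - 2*g^2 + g*g2 = 0) :
    2 * g1 * (2*p * ((2*p+1 : ℝ))⁻¹ * (g1/(2*g) + g/(2*g1)))
      + g * (2*p * (2*p) * ((2*p+1 : ℝ))⁻¹) + (g2 - 2*g) * (2*p * ((2*p+1 : ℝ))⁻¹)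
      = 2*p*g := by
  field_simp
  linear_combination p * hrel

end AIII

theorem stmt_13_general (p : ℕ) (g g1 g2 : ℝ) (hg : g ≠ 0) (hg1 : g1 ≠ 0)
    (hrel : g1^2 - 2*g^2 + g*g2 = 0) :
    ∑ a : Fin (2*p+1), ∑ b ∈ Finset.univ.filter (fun b : Fin (2*p+1) => b ≠ a),
      g11 p g g1 g2 a b • F11 p g g1 a b = 0 := by
  calc _ = ∑ a, ∑ b, g11 p g g1 g2 a b • F11 p g g1 a b :=
        sum_congr rfl fun a _ => sum_ne_eq_sum_univ a
    _ = (2 * g1) • ∑ a ∈ univ.erase (pmid p), Fmix11 p g g1 a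
          + g • ∑ a ∈ univ.erase (pmid p), ∑ b ∈ univ.erase (pmid p), Fstd11 p a b
          + (g2 - 2 * g) • ∑ a ∈ univ.erase (pmid p), Fstd11 p a a := by
        rw [← add_sum_erase _ _ (mem_univ (pmid p)), row_sum_pmid,
          sum_congr rfl fun a ha => row_sum_of_ne_pmid (ne_of_mem_erase ha)]
        simp only [sum_add_distrib, sum_sub_distrib, ← smul_sum, sum_Fstd11_theta2]
        module
    _ = 0 := by
        rw [sum_Fmix11, sum_sum_Fstd11, sum_Fstd11_self]
        linear_combination (norm := module)
          constraint_coeff_one_sub_pmid p hg hrel • (1 - single (pmid p) (pmid p) 1)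
            - constraint_coeff_pmid p g hg1 • single (pmid p) (pmid p) 1
            + constraint_coeff_one p hg hg1 hrel • 1

theorem stmt_13 (p : ℕ) (hp : 1 ≤ p) (g g1 g2 : ℝ) (hg : g ≠ 0) (hg1 : g1 ≠ 0)
    (hrel : g1^2 - 2*g^2 + g*g2 = 0) :
    ∑ a : Fin (2*p+1), ∑ b ∈ Finset.univ.filter (fun b : Fin (2*p+1) => b ≠ a),
      g11 p g g1 g2 a b • F11 p g g1 a b = 0 :=
  stmt_13_general p g g1 g2 hg hg1 hrel
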